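/- arXiv:2601.12907 — 5 statements merged into one kernel-verified Lean document; each statement's English description precedes it below -/
import Mathlib

section
/- (Theorem 1, slow-fast decomposition error.) Let d ∈ ℕ, T > 0, h > 0, N ∈ ℕ with N·h ≤ T, and set t_n = n·h. Let ε > 0, ε₀ > 0, and constants M, β, δ_φ, δ_F, C̄, C, λ, α ≥ 0 with λ > 0, and integers p ≥ 1, q ≥ 1. Let y : ℝ → ℝ^d (the exact solution), ψ : ℝ → ℝ^d (the exact averaged flow), φ_ex : ℝ × ℝ^d → ℝ^d (the truncated high-oscillation map), φ_θ : ℝ × ℝ^d → ℝ^d (its learned approximation), and Φ : ℝ^d → ℝ^d (the numerical one-step map with learned field). Assume: (i) ψ(0) = y(0); (ii) for all t ∈ [0, T], ‖y(t) − φ_ex(t/ε, ψ(t))‖ ≤ M·exp(−β·ε₀/ε) (averaging estimate); (iii) for all τ ∈ ℝ and z ∈ ℝ^d, ‖φ_ex(τ, z) − φ_θ(τ, z)‖ ≤ δ_φ·ε (learning error of the high-oscillation generator); (iv) for all τ ∈ ℝ and y₁, y₂ ∈ ℝ^d, ‖φ_θ(τ, y₁) − φ_θ(τ, y₂)‖ ≤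 (1 + α·ε)·‖y₁ − y₂‖; (v) for all n < N, ‖ψ(t_{n+1}) − Φ(ψ(t_n))‖ ≤ C̄·h^{p+q} + C·δ_F·h (consistency: modified-equation error plus learning error of the averaged field); (vi) for all y₁, y₂ ∈ ℝ^d, ‖Φ(y₁) − Φ(y₂)‖ ≤ (1 + λ·h)·‖y₁ − y₂‖. Then for every n ≤ N, ‖y(t_n) − φ_θ(t_n/ε, Φ^[n](y(0)))‖ ≤ M·exp(−β·ε₀/ε) + δ_φ·ε + (1 + α·ε)·((exp(λ·T) − 1)/λ)·(C̄·h^{p+q−1} + C·δ_F·1), where Φ^[n] is the n-fold iterate of Φ. -/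
/-- Theorem 1 of the paper: error estimate for the slow-fast decomposition based
machine-learning method for highly oscillatory ODEs. -/
theorem slow_fast_error (d : ℕ) (T h : ℝ) (N : ℕ)
    (hT : 0 < T) (hh : 0 < h) (hNT : (N : ℝ) * h ≤ T)
    (ε ε₀ : ℝ) (hε : 0 < ε) (hε₀ : 0 < ε₀)
    (M β δφ δF Cbar C lam α : ℝ)
    (hM : 0 ≤ M) (hβ : 0 ≤ β) (hδφ : 0 ≤ δφ) (hδF : 0 ≤ δF)
    (hCbar : 0 ≤ Cbar) (hC : 0 ≤ C) (hlam : 0 < lam) (hα : 0 ≤ α)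
    (p q : ℕ) (hp : 1 ≤ p) (hq : 1 ≤ q)
    (y ψ : ℝ → EuclideanSpace ℝ (Fin d))
    (φex φθ : ℝ → EuclideanSpace ℝ (Fin d) → EuclideanSpace ℝ (Fin d))
    (Φ : EuclideanSpace ℝ (Fin d) → EuclideanSpace ℝ (Fin d))
    -- (i) same initial value
    (hinit : ψ 0 = y 0)
    -- (ii) averaging estimate with exponentially small remainder
    (havg : ∀ t ∈ Set.Icc (0 : ℝ) T,
      ‖y t - φex (t / ε) (ψ t)‖ ≤ M * Real.exp (-(β * ε₀) / ε))
    -- (iii) learning error of the high-oscillation generator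
    (hlearn : ∀ (τ : ℝ) (z : EuclideanSpace ℝ (Fin d)),
      ‖φex τ z - φθ τ z‖ ≤ δφ * ε)
    -- (iv) Lipschitz bound for the learned generator
    (hφθlip : ∀ (τ : ℝ) (y₁ y₂ : EuclideanSpace ℝ (Fin d)),
      ‖φθ τ y₁ - φθ τ y₂‖ ≤ (1 + α * ε) * ‖y₁ - y₂‖)
    -- (v) consistency: modified-equation error plus learning error of the field
    (hcons : ∀ n < N,
      ‖ψ (((n : ℝ) + 1) * h) - Φ (ψ ((n : ℝ) * h))‖ ≤ Cbar * h ^ (p + q) + C * δF * h)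
    -- (vi) stability of the numerical one-step map
    (hstab : ∀ y₁ y₂ : EuclideanSpace ℝ (Fin d),
      ‖Φ y₁ - Φ y₂‖ ≤ (1 + lam * h) * ‖y₁ - y₂‖) :
    ∀ n ≤ N,
      ‖y ((n : ℝ) * h) - φθ ((n : ℝ) * h / ε) (Φ^[n] (y 0))‖ ≤
        M * Real.exp (-(β * ε₀) / ε) + δφ * ε +
          (1 + α * ε) * ((Real.exp (lam * T) - 1) / lam) *
            (Cbar * h ^ (p + q - 1) + C * δF * 1) := by
  intro n hn
  set K := Cbar * h ^ (p + q) + C * δF * h with hKdef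
  have hKpos : 0 ≤ K := by positivity
  have hx1 : (1:ℝ) < 1 + lam * h := by nlinarith
  have hx0 : (0:ℝ) ≤ 1 + lam * h := by linarith
  -- discrete Gronwall
  have key : ∀ m, m ≤ N → ‖ψ ((m:ℝ)*h) - Φ^[m] (ψ 0)‖ ≤
      (∑ i ∈ Finset.range m, (1+lam*h)^i) * K := by
    intro m hm
    induction m with
    | zero => simp
    | succ k ih =>
      have hk : k ≤ N := Nat.le_of_succ_le hm
      have ihk := ih hk
      have h1 := hcons k (Nat.lt_of_succ_le hm)
      have h2 := hstab (ψ ((k:ℝ)*h)) (Φ^[k] (ψ 0))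
      have tri : ‖ψ (((k+1:ℕ):ℝ)*h) - Φ^[k+1] (ψ 0)‖ ≤
          ‖ψ (((k:ℝ)+1)*h) - Φ (ψ ((k:ℝ)*h))‖ + ‖Φ (ψ ((k:ℝ)*h)) - Φ (Φ^[k] (ψ 0))‖ := by
        rw [Function.iterate_succ_apply', show (((k+1:ℕ):ℝ)) = (k:ℝ)+1 by push_cast; ring]
        exact norm_sub_le_norm_sub_add_norm_sub _ _ _
      have hsum : (∑ i ∈ Finset.range (k+1), (1+lam*h)^i)
          = (1+lam*h) * (∑ i ∈ Finset.range k, (1+lam*h)^i) + 1 := geom_sum_succ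
      have hSnn : 0 ≤ ∑ i ∈ Finset.range k, (1+lam*h)^i :=
        Finset.sum_nonneg fun i _ => pow_nonneg hx0 i
      calc ‖ψ (((k+1:ℕ):ℝ)*h) - Φ^[k+1] (ψ 0)‖
          ≤ K + (1+lam*h) * ‖ψ ((k:ℝ)*h) - Φ^[k] (ψ 0)‖ := by
            exact tri.trans (add_le_add h1 h2)
        _ ≤ K + (1+lam*h) * ((∑ i ∈ Finset.range k, (1+lam*h)^i) * K) := by
            gcongr
        _ = (∑ i ∈ Finset.range (k+1), (1+lam*h)^i) * K := by rw [hsum]; ring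
  -- the three-term split
  have htn : (n:ℝ)*h ∈ Set.Icc (0:ℝ) T := by
    constructor
    · positivity
    · calc (n:ℝ)*h ≤ (N:ℝ)*h := mul_le_mul_of_nonneg_right (by exact_mod_cast hn) hh.le
        _ ≤ T := hNT
  have h2 := hlearn ((n:ℝ)*h/ε) (ψ ((n:ℝ)*h))
  have h3 := hφθlip ((n:ℝ)*h/ε) (ψ ((n:ℝ)*h)) (Φ^[n] (y 0))
  have hkey := key n hn
  rw [hinit] at hkey
  -- bound the geometric sum
  have hgeom : (∑ i ∈ Finset.range n, (1+lam*h)^i) * K ≤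
      ((Real.exp (lam*T) - 1)/lam) * (Cbar * h ^ (p+q-1) + C * δF * 1) := by
    have hsum_eq : (∑ i ∈ Finset.range n, (1+lam*h)^i) = ((1+lam*h)^n - 1)/(lam*h) := by
      rw [geom_sum_eq (by linarith)]
      congr 1
      ring
    have hpow : (1+lam*h)^n ≤ Real.exp (lam*T) := by
      have h1 : (1+lam*h)^n ≤ (Real.exp (lam*h))^n :=
        pow_le_pow_left₀ hx0 (by linarith [Real.add_one_le_exp (lam*h)]) n
      have h2 : (Real.exp (lam*h))^n = Real.exp ((n:ℝ)*(lam*h)) :=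
        (Real.exp_nat_mul _ n).symm
      have h3 : Real.exp ((n:ℝ)*(lam*h)) ≤ Real.exp (lam*T) := by
        apply Real.exp_le_exp.mpr
        have := htn.2
        nlinarith [htn.1]
      calc (1+lam*h)^n ≤ (Real.exp (lam*h))^n := h1
        _ ≤ Real.exp (lam*T) := h2 ▸ h3
    have hKfact : K = (Cbar * h ^ (p+q-1) + C * δF * 1) * h := by
      rw [hKdef]
      have : h ^ (p+q) = h ^ (p+q-1) * h := by
        rw [← pow_succ]
        congr 1
        omega
      rw [this]; ring
    rw [hsum_eq, hKfact]
    rw [div_mul_eq_mul_div, div_mul_eq_mul_div]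
    rw [div_le_div_iff₀ (by positivity) hlam]
    have hB : 0 ≤ Cbar * h ^ (p+q-1) + C * δF * 1 := by positivity
    nlinarith [mul_nonneg hB hh.le, mul_le_mul_of_nonneg_right hpow (mul_nonneg hB hh.le)]
  have hαε : (0:ℝ) ≤ 1 + α * ε := by positivity
  calc ‖y ((n:ℝ)*h) - φθ ((n:ℝ)*h/ε) (Φ^[n] (y 0))‖
      ≤ ‖y ((n:ℝ)*h) - φex ((n:ℝ)*h/ε) (ψ ((n:ℝ)*h))‖
        + ‖φex ((n:ℝ)*h/ε) (ψ ((n:ℝ)*h)) - φθ ((n:ℝ)*h/ε) (ψ ((n:ℝ)*h))‖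
        + ‖φθ ((n:ℝ)*h/ε) (ψ ((n:ℝ)*h)) - φθ ((n:ℝ)*h/ε) (Φ^[n] (y 0))‖ := by
        have := dist_triangle4 (y ((n:ℝ)*h)) (φex ((n:ℝ)*h/ε) (ψ ((n:ℝ)*h)))
          (φθ ((n:ℝ)*h/ε) (ψ ((n:ℝ)*h))) (φθ ((n:ℝ)*h/ε) (Φ^[n] (y 0)))
        simpa [dist_eq_norm] using this
    _ ≤ M * Real.exp (-(β * ε₀) / ε) + δφ * ε + (1 + α*ε) * ‖ψ ((n:ℝ)*h) - Φ^[n] (y 0)‖ := by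
        exact add_le_add (add_le_add (havg _ htn) h2) h3
    _ ≤ M * Real.exp (-(β * ε₀) / ε) + δφ * ε +
        (1 + α*ε) * (((Real.exp (lam*T) - 1)/lam) * (Cbar * h ^ (p+q-1) + C * δF * 1)) := by
        gcongr
        exact hkey.trans hgeom
    _ = _ := by ring
end

section
/- (Theorem 2, micro-macro correction error.) Let d ∈ ℕ, T > 0, h > 0, N ∈ ℕ with N·h ≤ T, and set t_n = n·h. Let ε > 0, constants δ_φ, δ_F, δ_g, C̄, C, M', α_φ, β ≥ 0, λ > 0, μ > 0, and integers p ≥ 1, q ≥ 1. Let y, v, w : ℝ → ℝ^d, φ : ℝ × ℝ^d → ℝ^d (the truncated high-oscillation map), φ_θ : ℝ × ℝ^d → ℝ^d (its learned approximation), a one-step map Φ_v : ℝ^d → ℝ^d for the macro part, and one-step maps Ψ_n : ℝ^d × ℝ^d → ℝ^d for the micro part (n < N). Define the numerical sequences v_n = Φ_v^[n](v(0)) and w_0 = 0, w_{n+1} = Ψ_n(v_n, w_n). Assume: (i) y(t_n) = φ(t_n/ε, v(t_n)) + w(t_n) for all n ≤ N, with w(0) = 0 and v(0) = y(0) (exact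 micro-macro decomposition); (ii) ‖v(t_{n+1}) − Φ_v(v(t_n))‖ ≤ C̄·h^{p+q} + C·δ_F·h for all n < N; (iii) ‖Φ_v(y₁) − Φ_v(y₂)‖ ≤ (1 + λ·h)·‖y₁ − y₂‖ for all y₁, y₂; (iv) ‖w(t_{n+1}) − Ψ_n(v(t_n), w(t_n))‖ ≤ M'·h^{p+1} + C·δ_g·h for all n < N; (v) ‖Ψ_n(v₁, w₀) − Ψ_n(v₂, w₀)‖ ≤ β·h·‖v₁ − v₂‖ for all n < N, v₁, v₂, w₀; (vi) ‖Ψ_n(v₀, w₁) − Ψ_n(v₀, w₂)‖ ≤ (1 + μ·h)·‖w₁ − w₂‖ for all n < N, v₀, w₁, w₂; (vii) ‖φ(τ, y₁) − φ(τ, y₂)‖ ≤ α_φ·‖y₁ − y₂‖ for all τ, y₁, y₂; (viii) ‖φ(τ, z) − φ_θ(τ, z)‖ ≤ δ_φ·ε for all τ, z. Then for every n ≤ N, ‖y(t_n) − (φ_θ(t_n/ε, v_n) + w_n)‖ ≤ δ_φ·ε + α_φ·((exp(λ·T) − 1)/λ)·(C̄·h^{p+q−1} + C·δ_F) + ((exp(μ·T)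 − 1)/μ)·(M'·h^p + β·((exp(λ·T) − 1)/λ)·(C̄·h^{p+q−1} + C·δ_F) + C·δ_g). -/
lemma my_gronwall {N : ℕ} {lam h T c : ℝ} (hlam : 0 < lam) (hh : 0 < h)
    (hc : 0 ≤ c) (hNT : (N : ℝ) * h ≤ T) (e : ℕ → ℝ) (he0 : e 0 = 0)
    (hrec : ∀ n < N, e (n + 1) ≤ (1 + lam * h) * e n + h * c) :
    ∀ n ≤ N, e n ≤ (Real.exp (lam * T) - 1) / lam * c := by
  have hL : 0 < lam * h := by positivity
  have key : ∀ n ≤ N, e n ≤ ((1 + lam * h) ^ n - 1) / (lam * h) * (h * c) := by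
    intro n hn
    induction n with
    | zero => simp [he0]
    | succ k ih =>
      have hk : k < N := hn
      have ihk := ih hk.le
      have h1 : (0:ℝ) ≤ 1 + lam * h := by positivity
      calc e (k + 1) ≤ (1 + lam * h) * e k + h * c := hrec k hk
        _ ≤ (1 + lam * h) * (((1 + lam * h) ^ k - 1) / (lam * h) * (h * c)) + h * c := by
            nlinarith [ihk, h1]
        _ = ((1 + lam * h) ^ (k + 1) - 1) / (lam * h) * (h * c) := by
            field_simp
            ring
  intro n hn
  have hbn : (1 + lam * h) ^ n ≤ Real.exp (lam * T) := by
    have h1 : 1 + lam * h ≤ Real.exp (lam * h) := by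
      linarith [Real.add_one_le_exp (lam * h)]
    have hnh : (n : ℝ) * h ≤ T := by
      have hcast : (n : ℝ) ≤ (N : ℝ) := Nat.cast_le.mpr hn
      nlinarith
    calc (1 + lam * h) ^ n ≤ (Real.exp (lam * h)) ^ n :=
          pow_le_pow_left₀ (by positivity) h1 n
      _ = Real.exp ((n : ℝ) * (lam * h)) := (Real.exp_nat_mul _ n).symm
      _ ≤ Real.exp (lam * T) := by
          apply Real.exp_le_exp.mpr
          nlinarith
  have heq : ((1 + lam * h) ^ n - 1) / (lam * h) * (h * c)
      = ((1 + lam * h) ^ n - 1) * c / lam := by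
    field_simp
  calc e n ≤ ((1 + lam * h) ^ n - 1) / (lam * h) * (h * c) := key n hn
    _ = ((1 + lam * h) ^ n - 1) * c / lam := heq
    _ ≤ (Real.exp (lam * T) - 1) / lam * c := by
        rw [div_mul_eq_mul_div]
        gcongr


/-- Theorem 2 of the paper: error estimate for the micro-macro correction method,
yielding a uniformly accurate approximation. -/
theorem micro_macro_error (d : ℕ) (T h : ℝ) (N : ℕ)
    (hT : 0 < T) (hh : 0 < h) (hNT : (N : ℝ) * h ≤ T)
    (ε : ℝ) (hε : 0 < ε)
    (δφ δF δg Cbar C M' αφ β lam μ : ℝ)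
    (hδφ : 0 ≤ δφ) (hδF : 0 ≤ δF) (hδg : 0 ≤ δg) (hCbar : 0 ≤ Cbar)
    (hC : 0 ≤ C) (hM' : 0 ≤ M') (hαφ : 0 ≤ αφ) (hβ : 0 ≤ β)
    (hlam : 0 < lam) (hμ : 0 < μ)
    (p q : ℕ) (hp : 1 ≤ p) (hq : 1 ≤ q)
    (y v w : ℝ → EuclideanSpace ℝ (Fin d))
    (φ φθ : ℝ → EuclideanSpace ℝ (Fin d) → EuclideanSpace ℝ (Fin d))
    (Φv : EuclideanSpace ℝ (Fin d) → EuclideanSpace ℝ (Fin d))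
    (Ψ : ℕ → EuclideanSpace ℝ (Fin d) → EuclideanSpace ℝ (Fin d) →
      EuclideanSpace ℝ (Fin d))
    -- the numerical micro sequence: w₀ = 0, w_{n+1} = Ψ_n(v_n, w_n) with
    -- v_n = Φv^[n](v 0)
    (wseq : ℕ → EuclideanSpace ℝ (Fin d))
    (hwseq0 : wseq 0 = 0)
    (hwseqrec : ∀ n, wseq (n + 1) = Ψ n (Φv^[n] (v 0)) (wseq n))
    -- (i) exact micro-macro decomposition
    (hdecomp : ∀ n ≤ N, y ((n : ℝ) * h) = φ ((n : ℝ) * h / ε) (v ((n : ℝ) * h))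
        + w ((n : ℝ) * h))
    (hw0 : w 0 = 0) (hv0 : v 0 = y 0)
    -- (ii) consistency of the macro one-step map
    (hconsv : ∀ n < N,
      ‖v (((n : ℝ) + 1) * h) - Φv (v ((n : ℝ) * h))‖ ≤ Cbar * h ^ (p + q) + C * δF * h)
    -- (iii) stability of the macro one-step map
    (hstabv : ∀ y₁ y₂ : EuclideanSpace ℝ (Fin d),
      ‖Φv y₁ - Φv y₂‖ ≤ (1 + lam * h) * ‖y₁ - y₂‖)
    -- (iv) consistency of the micro one-step maps
    (hconsw : ∀ n < N,
      ‖w (((n : ℝ) + 1) * h) - Ψ n (v ((n : ℝ) * h)) (w ((n : ℝ) * h))‖ ≤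
        M' * h ^ (p + 1) + C * δg * h)
    -- (v) Lipschitz bound of the micro maps in the macro variable
    (hΨv : ∀ n < N, ∀ v₁ v₂ w₀ : EuclideanSpace ℝ (Fin d),
      ‖Ψ n v₁ w₀ - Ψ n v₂ w₀‖ ≤ β * h * ‖v₁ - v₂‖)
    -- (vi) stability of the micro maps in the micro variable
    (hΨw : ∀ n < N, ∀ v₀ w₁ w₂ : EuclideanSpace ℝ (Fin d),
      ‖Ψ n v₀ w₁ - Ψ n v₀ w₂‖ ≤ (1 + μ * h) * ‖w₁ - w₂‖)
    -- (vii) Lipschitz bound of the high-oscillation map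
    (hφlip : ∀ (τ : ℝ) (y₁ y₂ : EuclideanSpace ℝ (Fin d)),
      ‖φ τ y₁ - φ τ y₂‖ ≤ αφ * ‖y₁ - y₂‖)
    -- (viii) learning error of the high-oscillation map
    (hφlearn : ∀ (τ : ℝ) (z : EuclideanSpace ℝ (Fin d)),
      ‖φ τ z - φθ τ z‖ ≤ δφ * ε) :
    ∀ n ≤ N,
      ‖y ((n : ℝ) * h) - (φθ ((n : ℝ) * h / ε) (Φv^[n] (v 0)) + wseq n)‖ ≤
        δφ * ε +
          αφ * ((Real.exp (lam * T) - 1) / lam) * (Cbar * h ^ (p + q - 1) + C * δF) +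
          ((Real.exp (μ * T) - 1) / μ) *
            (M' * h ^ p +
              β * ((Real.exp (lam * T) - 1) / lam) * (Cbar * h ^ (p + q - 1) + C * δF) +
              C * δg) := by
  obtain ⟨r, hr⟩ : ∃ r, p + q = r + 1 := ⟨p + q - 1, by omega⟩
  have hr' : p + q - 1 = r := by omega
  have hexplam : 0 ≤ (Real.exp (lam * T) - 1) / lam := by
    have h1 : 1 ≤ Real.exp (lam * T) := Real.one_le_exp (by positivity)
    have := hlam
    apply div_nonneg <;> linarith
  set Elam : ℝ := (Real.exp (lam * T) - 1) / lam * (Cbar * h ^ r + C * δF) with hElam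
  have hElamnn : 0 ≤ Elam := by
    apply mul_nonneg hexplam
    positivity
  -- macro error bound
  have he : ∀ m ≤ N, ‖v ((m : ℝ) * h) - Φv^[m] (v 0)‖ ≤ Elam := by
    apply my_gronwall hlam hh (by positivity) hNT
    · norm_num
    · intro m hm
      have h1 := hconsv m hm
      have h2 := hstabv (v ((m : ℝ) * h)) (Φv^[m] (v 0))
      have htri := norm_add_le (v (((m : ℝ) + 1) * h) - Φv (v ((m : ℝ) * h)))
        (Φv (v ((m : ℝ) * h)) - Φv (Φv^[m] (v 0)))
      rw [sub_add_sub_cancel] at htri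
      have heq2 : Cbar * h ^ (p + q) + C * δF * h = h * (Cbar * h ^ r + C * δF) := by
        rw [hr]; ring
      have hcast : ((m + 1 : ℕ) : ℝ) = (m : ℝ) + 1 := by push_cast; ring
      rw [Function.iterate_succ_apply', hcast]
      linarith
  -- micro error bound
  set Fmu : ℝ := (Real.exp (μ * T) - 1) / μ * (M' * h ^ p + β * Elam + C * δg) with hFmu
  have hf : ∀ m ≤ N, ‖w ((m : ℝ) * h) - wseq m‖ ≤ Fmu := by
    apply my_gronwall hμ hh (by positivity) hNT
    · simp [hwseq0, hw0]
    · intro m hm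
      have h1 := hconsw m hm
      have h2 := hΨv m hm (v ((m : ℝ) * h)) (Φv^[m] (v 0)) (w ((m : ℝ) * h))
      have h3 := hΨw m hm (Φv^[m] (v 0)) (w ((m : ℝ) * h)) (wseq m)
      have hem := he m hm.le
      have htri1 := norm_add_le (w (((m : ℝ) + 1) * h) - Ψ m (v ((m : ℝ) * h)) (w ((m : ℝ) * h)))
        (Ψ m (v ((m : ℝ) * h)) (w ((m : ℝ) * h)) - Ψ m (Φv^[m] (v 0)) (wseq m))
      rw [sub_add_sub_cancel] at htri1
      have htri2 := norm_add_le
        (Ψ m (v ((m : ℝ) * h)) (w ((m : ℝ) * h)) - Ψ m (Φv^[m] (v 0)) (w ((m : ℝ) * h)))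
        (Ψ m (Φv^[m] (v 0)) (w ((m : ℝ) * h)) - Ψ m (Φv^[m] (v 0)) (wseq m))
      rw [sub_add_sub_cancel] at htri2
      have heq2 : M' * h ^ (p + 1) + C * δg * h = h * M' * h ^ p + h * (C * δg) := by ring
      have hcast : ((m + 1 : ℕ) : ℝ) = (m : ℝ) + 1 := by push_cast; ring
      have hbe : β * h * ‖v ((m : ℝ) * h) - Φv^[m] (v 0)‖ ≤ h * (β * Elam) := by
        have := mul_le_mul_of_nonneg_left hem (by positivity : (0:ℝ) ≤ β * h)
        linarith [this]
      rw [hwseqrec m, hcast]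
      have hmono : ‖w (((m : ℝ) + 1) * h) - Ψ m (Φv^[m] (v 0)) (wseq m)‖ ≤
          (M' * h ^ (p + 1) + C * δg * h) + (β * h * ‖v ((m : ℝ) * h) - Φv^[m] (v 0)‖)
          + (1 + μ * h) * ‖w ((m : ℝ) * h) - wseq m‖ := by linarith
      calc ‖w (((m : ℝ) + 1) * h) - Ψ m (Φv^[m] (v 0)) (wseq m)‖
          ≤ (M' * h ^ (p + 1) + C * δg * h) + h * (β * Elam)
            + (1 + μ * h) * ‖w ((m : ℝ) * h) - wseq m‖ := by linarith
        _ = (1 + μ * h) * ‖w ((m : ℝ) * h) - wseq m‖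
            + h * (M' * h ^ p + β * Elam + C * δg) := by rw [pow_succ]; ring
  -- conclusion
  intro n hn
  have hdn := hdecomp n hn
  have hen := he n hn
  have hfn := hf n hn
  have hlip := hφlip ((n : ℝ) * h / ε) (v ((n : ℝ) * h)) (Φv^[n] (v 0))
  have hlearn := hφlearn ((n : ℝ) * h / ε) (Φv^[n] (v 0))
  have htri1 := norm_add_le
    (φ ((n : ℝ) * h / ε) (v ((n : ℝ) * h)) - φ ((n : ℝ) * h / ε) (Φv^[n] (v 0))
      + (φ ((n : ℝ) * h / ε) (Φv^[n] (v 0)) - φθ ((n : ℝ) * h / ε) (Φv^[n] (v 0))))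
    (w ((n : ℝ) * h) - wseq n)
  have htri2 := norm_add_le
    (φ ((n : ℝ) * h / ε) (v ((n : ℝ) * h)) - φ ((n : ℝ) * h / ε) (Φv^[n] (v 0)))
    (φ ((n : ℝ) * h / ε) (Φv^[n] (v 0)) - φθ ((n : ℝ) * h / ε) (Φv^[n] (v 0)))
  have hrw : y ((n : ℝ) * h) - (φθ ((n : ℝ) * h / ε) (Φv^[n] (v 0)) + wseq n)
      = (φ ((n : ℝ) * h / ε) (v ((n : ℝ) * h)) - φ ((n : ℝ) * h / ε) (Φv^[n] (v 0))
          + (φ ((n : ℝ) * h / ε) (Φv^[n] (v 0)) - φθ ((n : ℝ) * h / ε) (Φv^[n] (v 0))))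
        + (w ((n : ℝ) * h) - wseq n) := by
    rw [hdn]; abel
  rw [hr', hrw]
  have hαe : αφ * ‖v ((n : ℝ) * h) - Φv^[n] (v 0)‖ ≤ αφ * Elam :=
    mul_le_mul_of_nonneg_left hen hαφ
  have hgoal1 : αφ * ((Real.exp (lam * T) - 1) / lam) * (Cbar * h ^ r + C * δF)
      = αφ * Elam := by rw [hElam]; ring
  have hgoal2 : (Real.exp (μ * T) - 1) / μ *
      (M' * h ^ p + β * ((Real.exp (lam * T) - 1) / lam) * (Cbar * h ^ r + C * δF) + C * δg)
      = Fmu := by rw [hFmu, hElam]; ring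
  rw [hgoal1, hgoal2]
  linarith
end

section
/- Let d ∈ ℕ, ε ∈ (0, 1], and constants L_f, δ_φ, δ_F, α_F, α_φ ≥ 0. Let f : ℝ × ℝ^d → ℝ^d, F, F_θ : ℝ^d → ℝ^d, and φ, φ_θ : ℝ × ℝ^d → ℝ^d be differentiable, and define g(τ, w, v) = f(τ, φ(τ, v) + w) − (1/ε)·∂_τφ(τ, v) − (D_yφ(τ, v))(F(v)) and g_θ(τ, w, v) = f(τ, φ_θ(τ, v) + w) − (1/ε)·∂_τφ_θ(τ, v) − (D_yφ_θ(τ, v))(F_θ(v)), where ∂_τφ denotes the partial derivative in the first variable and D_yφ(τ, v) the Fréchet derivative in the second variable. Assume: (i) ‖f(τ, y₁) − f(τ, y₂)‖ ≤ L_f·‖y₁ − y₂‖ for all τ, y₁, y₂; (ii) ‖φ(τ, v) − φ_θ(τ, v)‖ ≤ δ_φ·ε, ‖∂_τφ(τ, v) − ∂_τφ_θ(τ, v)‖ ≤ δ_φ·ε, and ‖D_yφ(τ, v) − D_yφ_θ(τ, v)‖_op ≤ δ_φ·ε for all τ, v; (iii) ‖F(v)‖ ≤ α_F for all v; (iv)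 ‖D_yφ_θ(τ, v)‖_op ≤ α_φ for all τ, v; (v) ‖F(v) − F_θ(v)‖ ≤ δ_F for all v. Then for all τ ∈ ℝ and w, v ∈ ℝ^d, ‖g(τ, w, v) − g_θ(τ, w, v)‖ ≤ (1 + L_f + α_F·ε)·δ_φ + α_φ·δ_F. -/
/-- Remark after Theorem 2: the learning error of the micro vector field `g` is
controlled by the `W^{1,∞}`-learning error `δ_φ` of the high-oscillation map and
the learning error `δ_F` of the averaged field:
`δ_g ≤ (1 + L_f + α_F·ε)·δ_φ + α_φ·δ_F`. -/
theorem micro_field_learning_error (d : ℕ) (ε : ℝ) (hε : 0 < ε) (hε1 : ε ≤ 1)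
    (Lf δφ δF αF αφ : ℝ)
    (hLf : 0 ≤ Lf) (hδφ : 0 ≤ δφ) (hδF : 0 ≤ δF) (hαF : 0 ≤ αF) (hαφ : 0 ≤ αφ)
    (f : ℝ → EuclideanSpace ℝ (Fin d) → EuclideanSpace ℝ (Fin d))
    (F Fθ : EuclideanSpace ℝ (Fin d) → EuclideanSpace ℝ (Fin d))
    (φ φθ : ℝ → EuclideanSpace ℝ (Fin d) → EuclideanSpace ℝ (Fin d))
    -- φ and φθ are differentiable, with partial derivative `Dτφ` in the first
    -- variable and Fréchet derivative `Dyφ` in the second variable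
    (Dτφ Dτφθ : ℝ → EuclideanSpace ℝ (Fin d) → EuclideanSpace ℝ (Fin d))
    (Dyφ Dyφθ : ℝ → EuclideanSpace ℝ (Fin d) →
      (EuclideanSpace ℝ (Fin d) →L[ℝ] EuclideanSpace ℝ (Fin d)))
    (hDτφ : ∀ (τ : ℝ) (v : EuclideanSpace ℝ (Fin d)),
      HasDerivAt (fun s => φ s v) (Dτφ τ v) τ)
    (hDτφθ : ∀ (τ : ℝ) (v : EuclideanSpace ℝ (Fin d)),
      HasDerivAt (fun s => φθ s v) (Dτφθ τ v) τ)
    (hDyφ : ∀ (τ : ℝ) (v : EuclideanSpace ℝ (Fin d)), HasFDerivAt (φ τ) (Dyφ τ v) v)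
    (hDyφθ : ∀ (τ : ℝ) (v : EuclideanSpace ℝ (Fin d)), HasFDerivAt (φθ τ) (Dyφθ τ v) v)
    -- (i) f is Lipschitz in its second variable
    (hfLip : ∀ (τ : ℝ) (y₁ y₂ : EuclideanSpace ℝ (Fin d)),
      ‖f τ y₁ - f τ y₂‖ ≤ Lf * ‖y₁ - y₂‖)
    -- (ii) W^{1,∞}-learning errors of the high-oscillation map
    (hφ0 : ∀ (τ : ℝ) (v : EuclideanSpace ℝ (Fin d)), ‖φ τ v - φθ τ v‖ ≤ δφ * ε)
    (hφτ : ∀ (τ : ℝ) (v : EuclideanSpace ℝ (Fin d)), ‖Dτφ τ v - Dτφθ τ v‖ ≤ δφ * ε)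
    (hφy : ∀ (τ : ℝ) (v : EuclideanSpace ℝ (Fin d)), ‖Dyφ τ v - Dyφθ τ v‖ ≤ δφ * ε)
    -- (iii) bound on the averaged field
    (hFbound : ∀ v : EuclideanSpace ℝ (Fin d), ‖F v‖ ≤ αF)
    -- (iv) bound on the derivative of the learned map
    (hDyφθbound : ∀ (τ : ℝ) (v : EuclideanSpace ℝ (Fin d)), ‖Dyφθ τ v‖ ≤ αφ)
    -- (v) learning error of the averaged field
    (hF : ∀ v : EuclideanSpace ℝ (Fin d), ‖F v - Fθ v‖ ≤ δF) :
    ∀ (τ : ℝ) (w v : EuclideanSpace ℝ (Fin d)),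
      ‖(f τ (φ τ v + w) - (1 / ε) • Dτφ τ v - Dyφ τ v (F v)) -
          (f τ (φθ τ v + w) - (1 / ε) • Dτφθ τ v - Dyφθ τ v (Fθ v))‖ ≤
        (1 + Lf + αF * ε) * δφ + αφ * δF := by
  intro τ w v
  have h1 : ‖f τ (φ τ v + w) - f τ (φθ τ v + w)‖ ≤ Lf * δφ := by
    calc ‖f τ (φ τ v + w) - f τ (φθ τ v + w)‖ ≤ Lf * ‖(φ τ v + w) - (φθ τ v + w)‖ :=
          hfLip τ _ _
      _ = Lf * ‖φ τ v - φθ τ v‖ := by congr 1; rw [add_sub_add_right_eq_sub]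
      _ ≤ Lf * (δφ * ε) := by
          exact mul_le_mul_of_nonneg_left (hφ0 τ v) hLf
      _ ≤ Lf * δφ := by nlinarith [mul_nonneg (mul_nonneg hLf hδφ) (sub_nonneg.2 hε1)]
  have h2 : ‖(1 / ε) • Dτφ τ v - (1 / ε) • Dτφθ τ v‖ ≤ δφ := by
    rw [← smul_sub, norm_smul]
    have : ‖(1 / ε : ℝ)‖ = 1 / ε := by
      rw [Real.norm_eq_abs, abs_of_pos]; positivity
    rw [this]
    calc (1 / ε) * ‖Dτφ τ v - Dτφθ τ v‖ ≤ (1 / ε) * (δφ * ε) := by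
          exact mul_le_mul_of_nonneg_left (hφτ τ v) (by positivity)
      _ = δφ := by field_simp
  have h3 : ‖Dyφ τ v (F v) - Dyφθ τ v (Fθ v)‖ ≤ αF * ε * δφ + αφ * δF := by
    have : Dyφ τ v (F v) - Dyφθ τ v (Fθ v)
        = (Dyφ τ v - Dyφθ τ v) (F v) + Dyφθ τ v (F v - Fθ v) := by
      simp only [ContinuousLinearMap.sub_apply, map_sub]; abel
    rw [this]
    have a1 : ‖(Dyφ τ v - Dyφθ τ v) (F v)‖ ≤ (δφ * ε) * αF :=
      le_trans (ContinuousLinearMap.le_opNorm _ _)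
        (mul_le_mul (hφy τ v) (hFbound v) (norm_nonneg _) (by positivity))
    have a2 : ‖Dyφθ τ v (F v - Fθ v)‖ ≤ αφ * δF :=
      le_trans (ContinuousLinearMap.le_opNorm _ _)
        (mul_le_mul (hDyφθbound τ v) (hF v) (norm_nonneg _) hαφ)
    calc ‖(Dyφ τ v - Dyφθ τ v) (F v) + Dyφθ τ v (F v - Fθ v)‖
        ≤ ‖(Dyφ τ v - Dyφθ τ v) (F v)‖ + ‖Dyφθ τ v (F v - Fθ v)‖ := norm_add_le _ _
      _ ≤ (δφ * ε) * αF + αφ * δF := add_le_add a1 a2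
      _ = αF * ε * δφ + αφ * δF := by ring
  calc ‖(f τ (φ τ v + w) - (1 / ε) • Dτφ τ v - Dyφ τ v (F v)) -
          (f τ (φθ τ v + w) - (1 / ε) • Dτφθ τ v - Dyφθ τ v (Fθ v))‖
      = ‖(f τ (φ τ v + w) - f τ (φθ τ v + w))
          - ((1 / ε) • Dτφ τ v - (1 / ε) • Dτφθ τ v)
          - (Dyφ τ v (F v) - Dyφθ τ v (Fθ v))‖ := by congr 1; abel
    _ ≤ ‖(f τ (φ τ v + w) - f τ (φθ τ v + w))
          - ((1 / ε) • Dτφ τ v - (1 / ε) • Dτφθ τ v)‖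
          + ‖Dyφ τ v (F v) - Dyφθ τ v (Fθ v)‖ := norm_sub_le _ _
    _ ≤ (‖f τ (φ τ v + w) - f τ (φθ τ v + w)‖
          + ‖(1 / ε) • Dτφ τ v - (1 / ε) • Dτφθ τ v‖)
          + ‖Dyφ τ v (F v) - Dyφθ τ v (Fθ v)‖ := by gcongr; exact norm_sub_le _ _
    _ ≤ (Lf * δφ + δφ) + (αF * ε * δφ + αφ * δF) := by gcongr
    _ = (1 + Lf + αF * ε) * δφ + αφ * δF := by ring
end

section
/- (Theorem 3, alternative method for autonomous systems.) Let d ∈ ℕ, T > 0, h > 0, N ∈ ℕ with N·h ≤ T, and set t_n = n·h. Let ε > 0 and constants δ_Φ, δ_φ, C_T ≥ 0, L ≥ 0, λ > 0. Let y : ℝ → ℝ^d (the exact solution), ψ : ℝ → ℝ^d (the exact slow flow t ↦ φ_t^{g^ε}(y(0))), Φ_ex : ℝ × ℝ^d → ℝ^d (the exact periodic flow of the normal form), φ_θ : ℝ × ℝ^d → ℝ^d (its learned approximation), and R : ℝ^d → ℝ^d λ-Lipschitz, with numerical map Φ_num(z) = z + h·R(z). Assume: (i) ψ(0) = y(0);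 (ii) ‖y(t_n) − Φ_ex(t_n/ε, ψ(t_n))‖ ≤ C_T·exp(−C_T/ε) for all n ≤ N (normal-form estimate); (iii) ‖Φ_ex(τ, z) − φ_θ(τ, z)‖ ≤ δ_Φ for all τ, z; (iv) ‖Φ_ex(τ, z₁) − Φ_ex(τ, z₂)‖ ≤ L·‖z₁ − z₂‖ for all τ, z₁, z₂; (v) ‖ψ(t_{n+1}) − Φ_num(ψ(t_n))‖ ≤ δ_φ·h for all n < N. Then for every n ≤ N, ‖y(t_n) − φ_θ(t_n/ε, Φ_num^[n](y(0)))‖ ≤ δ_Φ + L·((exp(λ·T) − 1)/λ)·δ_φ + C_T·exp(−C_T/ε). -/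
/-- Theorem 3 of the paper: error estimate for the alternative machine-learning
method for autonomous highly oscillatory systems, based on the normal-form
decomposition `y(t) ≈ Φ_ex(t/ε, φ_t^{g^ε}(y(0)))`. -/
theorem autonomous_alternative_error (d : ℕ) (T h : ℝ) (N : ℕ)
    (hT : 0 < T) (hh : 0 < h) (hNT : (N : ℝ) * h ≤ T)
    (ε : ℝ) (hε : 0 < ε)
    (δΦ δφ CT L lam : ℝ)
    (hδΦ : 0 ≤ δΦ) (hδφ : 0 ≤ δφ) (hCT : 0 ≤ CT) (hL : 0 ≤ L) (hlam : 0 < lam)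
    (y ψ : ℝ → EuclideanSpace ℝ (Fin d))
    (Φex φθ : ℝ → EuclideanSpace ℝ (Fin d) → EuclideanSpace ℝ (Fin d))
    (R : EuclideanSpace ℝ (Fin d) → EuclideanSpace ℝ (Fin d))
    (hR : LipschitzWith (Real.toNNReal lam) R)
    (Φnum : EuclideanSpace ℝ (Fin d) → EuclideanSpace ℝ (Fin d))
    (hΦnum : ∀ z, Φnum z = z + h • R z)
    -- (i) same initial value
    (hinit : ψ 0 = y 0)
    -- (ii) normal-form estimate with exponentially small remainder
    (hnf : ∀ n ≤ N,
      ‖y ((n : ℝ) * h) - Φex ((n : ℝ) * h / ε) (ψ ((n : ℝ) * h))‖ ≤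
        CT * Real.exp (-CT / ε))
    -- (iii) learning error of the periodic flow
    (hlearn : ∀ (τ : ℝ) (z : EuclideanSpace ℝ (Fin d)), ‖Φex τ z - φθ τ z‖ ≤ δΦ)
    -- (iv) Lipschitz bound of the exact periodic flow
    (hΦexLip : ∀ (τ : ℝ) (z₁ z₂ : EuclideanSpace ℝ (Fin d)),
      ‖Φex τ z₁ - Φex τ z₂‖ ≤ L * ‖z₁ - z₂‖)
    -- (v) consistency of the learned slow flow
    (hcons : ∀ n < N,
      ‖ψ (((n : ℝ) + 1) * h) - Φnum (ψ ((n : ℝ) * h))‖ ≤ δφ * h) :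
    ∀ n ≤ N,
      ‖y ((n : ℝ) * h) - φθ ((n : ℝ) * h / ε) (Φnum^[n] (y 0))‖ ≤
        δΦ + L * ((Real.exp (lam * T) - 1) / lam) * δφ + CT * Real.exp (-CT / ε) := by

  have hΦlip : ∀ a b : EuclideanSpace ℝ (Fin d),
      ‖Φnum a - Φnum b‖ ≤ (1 + lam * h) * ‖a - b‖ := by
    intro a b
    rw [hΦnum a, hΦnum b]
    have h1 : a + h • R a - (b + h • R b) = (a - b) + h • (R a - R b) := by
      rw [smul_sub]; abel
    rw [h1]
    have hRd : ‖R a - R b‖ ≤ lam * ‖a - b‖ := by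
      have := hR.dist_le_mul a b
      simpa [dist_eq_norm, Real.coe_toNNReal _ hlam.le] using this
    calc ‖(a - b) + h • (R a - R b)‖ ≤ ‖a - b‖ + ‖h • (R a - R b)‖ := norm_add_le _ _
      _ ≤ ‖a - b‖ + h * (lam * ‖a - b‖) := by
          rw [norm_smul, Real.norm_of_nonneg hh.le]
          gcongr
      _ = (1 + lam * h) * ‖a - b‖ := by ring
  have key : ∀ m ≤ N, ‖ψ ((m : ℝ) * h) - Φnum^[m] (y 0)‖ ≤
      δφ * ((1 + lam * h) ^ m - 1) / lam := by
    intro m hm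
    induction m with
    | zero => simp [hinit]
    | succ k ih =>
      have hkN : k < N := hm
      have ihk := ih hkN.le
      have step := hcons k hkN
      have hdec : ψ ((↑(k + 1) : ℝ) * h) - Φnum^[k + 1] (y 0)
          = (ψ (((k : ℝ) + 1) * h) - Φnum (ψ ((k : ℝ) * h)))
            + (Φnum (ψ ((k : ℝ) * h)) - Φnum (Φnum^[k] (y 0))) := by
        rw [Function.iterate_succ_apply']
        push_cast
        abel
      rw [hdec]
      have h2 : ‖Φnum (ψ ((k : ℝ) * h)) - Φnum (Φnum^[k] (y 0))‖ ≤
          (1 + lam * h) * (δφ * ((1 + lam * h) ^ k - 1) / lam) := by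
        refine (hΦlip _ _).trans ?_
        have hpos : (0 : ℝ) ≤ 1 + lam * h := by positivity
        exact mul_le_mul_of_nonneg_left ihk hpos
      calc ‖(ψ (((k : ℝ) + 1) * h) - Φnum (ψ ((k : ℝ) * h)))
            + (Φnum (ψ ((k : ℝ) * h)) - Φnum (Φnum^[k] (y 0)))‖
          ≤ ‖ψ (((k : ℝ) + 1) * h) - Φnum (ψ ((k : ℝ) * h))‖
            + ‖Φnum (ψ ((k : ℝ) * h)) - Φnum (Φnum^[k] (y 0))‖ := norm_add_le _ _
        _ ≤ δφ * h + (1 + lam * h) * (δφ * ((1 + lam * h) ^ k - 1) / lam) :=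
            add_le_add step h2
        _ = δφ * ((1 + lam * h) ^ (k + 1) - 1) / lam := by
            field_simp
            ring
  intro n hn
  have hen : ‖ψ ((n : ℝ) * h) - Φnum^[n] (y 0)‖ ≤ (Real.exp (lam * T) - 1) / lam * δφ := by
    refine (key n hn).trans ?_
    have hpow : (1 + lam * h) ^ n ≤ Real.exp (lam * T) := by
      calc (1 + lam * h) ^ n ≤ Real.exp (lam * h) ^ n := by
            apply pow_le_pow_left₀ (by positivity)
            linarith [Real.add_one_le_exp (lam * h)]
        _ = Real.exp ((n : ℝ) * (lam * h)) := by
            rw [← Real.exp_nat_mul]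
        _ ≤ Real.exp (lam * T) := by
            apply Real.exp_le_exp.mpr
            have hnh : (n : ℝ) * h ≤ T := by
              refine le_trans ?_ hNT
              exact mul_le_mul_of_nonneg_right (by exact_mod_cast hn) hh.le
            calc (n : ℝ) * (lam * h) = lam * ((n : ℝ) * h) := by ring
              _ ≤ lam * T := mul_le_mul_of_nonneg_left hnh hlam.le
    rw [div_mul_eq_mul_div, mul_comm (Real.exp (lam * T) - 1) δφ]
    gcongr
  have hdec2 : y ((n : ℝ) * h) - φθ ((n : ℝ) * h / ε) (Φnum^[n] (y 0))
      = (y ((n : ℝ) * h) - Φex ((n : ℝ) * h / ε) (ψ ((n : ℝ) * h)))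
        + (Φex ((n : ℝ) * h / ε) (ψ ((n : ℝ) * h)) - Φex ((n : ℝ) * h / ε) (Φnum^[n] (y 0)))
        + (Φex ((n : ℝ) * h / ε) (Φnum^[n] (y 0)) - φθ ((n : ℝ) * h / ε) (Φnum^[n] (y 0))) := by
    abel
  rw [hdec2]
  have hmid : ‖Φex ((n : ℝ) * h / ε) (ψ ((n : ℝ) * h)) - Φex ((n : ℝ) * h / ε) (Φnum^[n] (y 0))‖
      ≤ L * ((Real.exp (lam * T) - 1) / lam * δφ) := by
    refine (hΦexLip _ _ _).trans ?_
    exact mul_le_mul_of_nonneg_left hen hL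
  calc ‖_ + _ + _‖ ≤ ‖y ((n : ℝ) * h) - Φex ((n : ℝ) * h / ε) (ψ ((n : ℝ) * h))‖
        + ‖Φex ((n : ℝ) * h / ε) (ψ ((n : ℝ) * h)) - Φex ((n : ℝ) * h / ε) (Φnum^[n] (y 0))‖
        + ‖Φex ((n : ℝ) * h / ε) (Φnum^[n] (y 0)) - φθ ((n : ℝ) * h / ε) (Φnum^[n] (y 0))‖ :=
      norm_add₃_le
    _ ≤ CT * Real.exp (-CT / ε) + L * ((Real.exp (lam * T) - 1) / lam * δφ) + δΦ :=
      add_le_add (add_le_add (hnf n hn) hmid) (hlearn _ _)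
    _ = δΦ + L * ((Real.exp (lam * T) - 1) / lam) * δφ + CT * Real.exp (-CT / ε) := by ring
end

section
/- Define f : ℝ × ℝ² → ℝ² by f(τ, (y₁, y₂)) = (−sin(τ)·P(τ, y₁, y₂), cos(τ)·P(τ, y₁, y₂)), where P(τ, y₁, y₂) = (1/4 − (y₁·cos(τ) + y₂·sin(τ))²)·(−y₁·sin(τ) + y₂·cos(τ)) (the rotated Van der Pol vector field). Then for every (y₁, y₂) ∈ ℝ², (1/(2π))·∫_0^{2π} f(τ, (y₁, y₂)) dτ = ((1/8)·(1 − y₁² − y₂²)·y₁, (1/8)·(1 − y₁² − y₂²)·y₂). -/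
open Real

private lemma basisDeriv (A B C D K τ : ℝ) :
    HasDerivAt (fun t : ℝ => A * t + B * (Real.sin t * Real.cos t) + C * (Real.sin t) ^ 2
        + D * (Real.sin t) ^ 4
        + K * (Real.sin t * Real.cos t * ((Real.cos t) ^ 2 - (Real.sin t) ^ 2)))
      (A + B * ((Real.cos τ) ^ 2 - (Real.sin τ) ^ 2)
        + C * (2 * Real.sin τ * Real.cos τ)
        + D * (4 * (Real.sin τ) ^ 3 * Real.cos τ)
        + K * (((Real.cos τ) ^ 2 - (Real.sin τ) ^ 2) ^ 2
            - 4 * (Real.sin τ) ^ 2 * (Real.cos τ) ^ 2)) τ := by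
  have hs := Real.hasDerivAt_sin τ
  have hc := Real.hasDerivAt_cos τ
  have h1 : HasDerivAt (fun t : ℝ => A * t) A τ := by
    simpa using (hasDerivAt_id τ).const_mul A
  have h2 : HasDerivAt (fun t : ℝ => B * (Real.sin t * Real.cos t))
      (B * (Real.cos τ * Real.cos τ + Real.sin τ * (-Real.sin τ))) τ :=
    (hs.mul hc).const_mul B
  have h3 : HasDerivAt (fun t : ℝ => C * (Real.sin t) ^ 2)
      (C * (2 * (Real.sin τ) ^ 1 * Real.cos τ)) τ := by
    simpa using ((hs.pow 2).const_mul C)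
  have h4 : HasDerivAt (fun t : ℝ => D * (Real.sin t) ^ 4)
      (D * (4 * (Real.sin τ) ^ 3 * Real.cos τ)) τ := by
    simpa using ((hs.pow 4).const_mul D)
  have h5 : HasDerivAt (fun t : ℝ => Real.sin t * Real.cos t) 
      (Real.cos τ * Real.cos τ + Real.sin τ * (-Real.sin τ)) τ := hs.mul hc
  have h6 : HasDerivAt (fun t : ℝ => (Real.cos t) ^ 2 - (Real.sin t) ^ 2)
      (2 * (Real.cos τ) ^ 1 * (-Real.sin τ) - 2 * (Real.sin τ) ^ 1 * Real.cos τ) τ := by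
    simpa using ((hc.fun_pow 2).fun_sub (hs.fun_pow 2))
  have h7 := ((h5.fun_mul h6).const_mul K)
  have := ((h1.fun_add h2).fun_add h3).fun_add h4 |>.fun_add h7
  refine this.congr_deriv ?_
  ring

/-- The average field of the rotated Van der Pol vector field
`f(τ, y) = (−sin τ · P(τ, y), cos τ · P(τ, y))` with
`P(τ, y) = (1/4 − (y₁ cos τ + y₂ sin τ)²)(−y₁ sin τ + y₂ cos τ)`
is `⟨f⟩(y) = (1/8)(1 − |y|²)·y`. -/
theorem van_der_pol_average_field (y : ℝ × ℝ) :
    (1 / (2 * Real.pi)) •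
      (∫ τ in (0 : ℝ)..(2 * Real.pi),
        ((-Real.sin τ *
            ((1 / 4 - (y.1 * Real.cos τ + y.2 * Real.sin τ) ^ 2) *
              (-y.1 * Real.sin τ + y.2 * Real.cos τ)),
          Real.cos τ *
            ((1 / 4 - (y.1 * Real.cos τ + y.2 * Real.sin τ) ^ 2) *
              (-y.1 * Real.sin τ + y.2 * Real.cos τ))) : ℝ × ℝ)) =
    (((1 / 8) * (1 - y.1 ^ 2 - y.2 ^ 2) * y.1,
      (1 / 8) * (1 - y.1 ^ 2 - y.2 ^ 2) * y.2) : ℝ × ℝ) := by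
  obtain ⟨a, b⟩ := y
  simp only
  set A1 : ℝ := (a - a * b ^ 2 - a ^ 3) / 8 with hA1
  set B1 : ℝ := -a / 8 + a * b ^ 2 / 2 with hB1
  set C1 : ℝ := -b / 8 + a ^ 2 * b / 2 with hC1
  set D1 : ℝ := b ^ 3 / 4 - 3 * a ^ 2 * b / 4 with hD1
  set K1 : ℝ := a ^ 3 / 8 - 3 * a * b ^ 2 / 8 with hK1
  set A2 : ℝ := (b - b ^ 3 - a ^ 2 * b) / 8 with hA2
  set B2 : ℝ := b / 8 - a ^ 2 * b / 2 with hB2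
  set C2 : ℝ := -a / 8 - a * b ^ 2 + a ^ 3 / 2 with hC2
  set D2 : ℝ := 3 * a * b ^ 2 / 4 - a ^ 3 / 4 with hD2
  set K2 : ℝ := b ^ 3 / 8 - 3 * a ^ 2 * b / 8 with hK2
  set F : ℝ → ℝ × ℝ := fun t =>
    (A1 * t + B1 * (Real.sin t * Real.cos t) + C1 * (Real.sin t) ^ 2
       + D1 * (Real.sin t) ^ 4
       + K1 * (Real.sin t * Real.cos t * ((Real.cos t) ^ 2 - (Real.sin t) ^ 2)),
     A2 * t + B2 * (Real.sin t * Real.cos t) + C2 * (Real.sin t) ^ 2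
       + D2 * (Real.sin t) ^ 4
       + K2 * (Real.sin t * Real.cos t * ((Real.cos t) ^ 2 - (Real.sin t) ^ 2))) with hFdef
  have hF : ∀ t ∈ Set.uIcc (0 : ℝ) (2 * Real.pi),
      HasDerivAt F
        ((-Real.sin t *
            ((1 / 4 - (a * Real.cos t + b * Real.sin t) ^ 2) *
              (-a * Real.sin t + b * Real.cos t)),
          Real.cos t *
            ((1 / 4 - (a * Real.cos t + b * Real.sin t) ^ 2) *
              (-a * Real.sin t + b * Real.cos t))) : ℝ × ℝ) t := by
    intro t _
    have h1 := basisDeriv A1 B1 C1 D1 K1 t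
    have h2 := basisDeriv A2 B2 C2 D2 K2 t
    have key := h1.prodMk h2
    have hsc := Real.sin_sq_add_cos_sq t
    set s := Real.sin t
    set c := Real.cos t
    have e1 : A1 + B1 * (c ^ 2 - s ^ 2) + C1 * (2 * s * c) + D1 * (4 * s ^ 3 * c)
        + K1 * ((c ^ 2 - s ^ 2) ^ 2 - 4 * s ^ 2 * c ^ 2)
        = -s * ((1 / 4 - (a * c + b * s) ^ 2) * (-a * s + b * c)) := by
      rw [hA1, hB1, hC1, hD1, hK1]
      linear_combination (-a / 8 + a * b ^ 2 / 8 + a ^ 3 / 8 - 3 / 8 * c ^ 2 * a * b ^ 2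
        + 1 / 8 * c ^ 2 * a ^ 3 - s * c * a ^ 2 * b + 5 / 8 * s ^ 2 * a * b ^ 2
        + 1 / 8 * s ^ 2 * a ^ 3) * hsc
    have e2 : A2 + B2 * (c ^ 2 - s ^ 2) + C2 * (2 * s * c) + D2 * (4 * s ^ 3 * c)
        + K2 * ((c ^ 2 - s ^ 2) ^ 2 - 4 * s ^ 2 * c ^ 2)
        = c * ((1 / 4 - (a * c + b * s) ^ 2) * (-a * s + b * c)) := by
      rw [hA2, hB2, hC2, hD2, hK2]
      linear_combination (-b / 8 + b ^ 3 / 8 + a ^ 2 * b / 8 + 1 / 8 * c ^ 2 * b ^ 3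
        + 5 / 8 * c ^ 2 * a ^ 2 * b + 2 * s * c * a * b ^ 2 - s * c * a ^ 3
        + 1 / 8 * s ^ 2 * b ^ 3 - 3 / 8 * s ^ 2 * a ^ 2 * b) * hsc
    rw [← e1, ← e2]
    exact key
  have hInt : IntervalIntegrable
      (fun t : ℝ =>
        ((-Real.sin t *
            ((1 / 4 - (a * Real.cos t + b * Real.sin t) ^ 2) *
              (-a * Real.sin t + b * Real.cos t)),
          Real.cos t *
            ((1 / 4 - (a * Real.cos t + b * Real.sin t) ^ 2) *
              (-a * Real.sin t + b * Real.cos t))) : ℝ × ℝ))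
      MeasureTheory.volume 0 (2 * Real.pi) := by
    apply Continuous.intervalIntegrable
    fun_prop
  rw [intervalIntegral.integral_eq_sub_of_hasDerivAt hF hInt]
  rw [hFdef]
  simp only [Real.sin_two_pi, Real.cos_two_pi, Real.sin_zero, Real.cos_zero]
  have hπ : Real.pi ≠ 0 := Real.pi_ne_zero
  rw [Prod.ext_iff]
  constructor <;>
  · simp only [Prod.smul_fst, Prod.smul_snd, Prod.fst_sub, Prod.snd_sub, smul_eq_mul]
    simp only [hA1, hA2]
    field_simp
    ring
end
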